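/- Fix n ≥ 1 and let G be a 2ⁿ×2ⁿ Hermitian complex matrix with G² = I, and define U(θ) = exp(−(i θ / 2)·G) for θ ∈ ℝ. For any 2ⁿ×2ⁿ complex matrices M and ρ, the function f(θ) = Re(trace(M · U(θ) · ρ · U(θ)†)) is differentiable in θ and satisfies the parameter-shift rule: f′(θ) = (1/2)·( f(θ + π/2) − f(θ − π/2) ) for every θ ∈ ℝ. -/

import Mathlib

/-!
Since `G * G = 1`, the exponential series of `z • G` splits into its even and odd parts, so
`U(θ) = cos (θ/2) - sin (θ/2) • (i • G)`, and `U(θ)ᴴ = U(-θ)` because `G` is Hermitian. Hence the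
rotated state `U(θ) ρ U(θ)ᴴ` is `ρ₀ + cos θ • ρ₁ + sin θ • ρ₂`, and so is the real-linear
functional `f` of it. For such a function the derivative `-sin θ • b + cos θ • c` is half the
difference of its values at `θ ± π/2`, because `cos (θ ± π/2) = ∓ sin θ` and
`sin (θ ± π/2) = ± cos θ`.
-/

open Matrix

/-- The one-parameter rotation gate `U(θ) = exp(−(i θ / 2)·G)`. -/
noncomputable def gate (n : ℕ) (G : Matrix (Fin (2 ^ n)) (Fin (2 ^ n)) ℂ) (θ : ℝ) :
    Matrix (Fin (2 ^ n)) (Fin (2 ^ n)) ℂ :=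
  NormedSpace.exp ((-(Complex.I * (θ / 2))) • G)

/-- The expectation value `f(θ) = Re(tr(M · U(θ) · ρ · U(θ)†))`. -/
noncomputable def expectation (n : ℕ) (G M ρ : Matrix (Fin (2 ^ n)) (Fin (2 ^ n)) ℂ)
    (θ : ℝ) : ℝ :=
  (Matrix.trace (M * gate n G θ * ρ * (gate n G θ)ᴴ)).re

open Real

theorem NormedSpace.exp_smul_of_mul_self_eq_one {𝔸 : Type*} [Ring 𝔸] [Algebra ℂ 𝔸]
    [TopologicalSpace 𝔸] [IsTopologicalRing 𝔸] [T2Space 𝔸] [ContinuousSMul ℂ 𝔸] {x : 𝔸}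
    (hx : x * x = 1) (z : ℂ) :
    NormedSpace.exp (z • x) = Complex.cosh z • (1 : 𝔸) + Complex.sinh z • x := by
  have hx_even (k : ℕ) : x ^ (2 * k) = 1 := by rw [pow_mul, sq, hx, one_pow]
  rw [NormedSpace.exp_eq_tsum ℂ]
  refine HasSum.tsum_eq (HasSum.even_add_odd ?_ ?_)
  · convert (Complex.hasSum_cosh z).smul_const (1 : 𝔸) using 2 with k
    rw [smul_pow, hx_even, smul_smul, div_eq_inv_mul]
  · convert (Complex.hasSum_sinh z).smul_const x using 2 with k
    rw [smul_pow, pow_succ x, hx_even, one_mul, smul_smul, div_eq_inv_mul]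

theorem hasDerivAt_shift_pi_div_two_of_eq_cos_sin {E : Type*} [NormedAddCommGroup E]
    [NormedSpace ℝ E] {f : ℝ → E} {a b c : E} (hf : ∀ t, f t = a + cos t • b + sin t • c)
    (θ : ℝ) : HasDerivAt f ((2⁻¹ : ℝ) • (f (θ + π / 2) - f (θ - π / 2))) θ := by
  have hderiv : HasDerivAt f (0 + -sin θ • b + cos θ • c) θ := by
    rw [funext hf]
    exact ((hasDerivAt_const θ a).add ((hasDerivAt_cos θ).smul_const b)).add
      ((hasDerivAt_sin θ).smul_const c)
  convert hderiv using 1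
  simp only [hf, cos_add_pi_div_two, sin_add_pi_div_two, cos_sub_pi_div_two, sin_sub_pi_div_two]
  module

theorem cos_sub_sin_mul_mul_cos_add_sin {A : Type*} [Ring A] [Algebra ℝ A] (J X : A) (θ : ℝ) :
    (cos (θ / 2) • 1 - sin (θ / 2) • J) * X * (cos (θ / 2) • 1 + sin (θ / 2) • J) =
      (2⁻¹ : ℝ) • (X - J * X * J) + cos θ • (2⁻¹ : ℝ) • (X + J * X * J)
        + sin θ • (2⁻¹ : ℝ) • (X * J - J * X) := by
  have hcos : cos θ = cos (θ / 2) ^ 2 - sin (θ / 2) ^ 2 := by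
    rw [← cos_two_mul', mul_div_cancel₀ θ two_ne_zero]
  have hsin : sin θ = 2 * sin (θ / 2) * cos (θ / 2) := by
    rw [← sin_two_mul, mul_div_cancel₀ θ two_ne_zero]
  have hpyth := sin_sq_add_cos_sq (θ / 2)
  rw [hcos, hsin]
  simp only [mul_add, sub_mul, smul_mul_assoc, mul_smul_comm, one_mul, mul_one, smul_smul]
  match_scalars <;> linarith

section Gate

variable {n : ℕ} {G : Matrix (Fin (2 ^ n)) (Fin (2 ^ n)) ℂ}

theorem gate_eq_cos_sub_sin (hG2 : G * G = 1) (θ : ℝ) :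
    gate n G θ = cos (θ / 2) • 1 - sin (θ / 2) • (Complex.I • G) := by
  have hz : -(Complex.I * (θ / 2)) = ((-(θ / 2) : ℝ) : ℂ) * Complex.I := by push_cast; ring
  rw [gate, NormedSpace.exp_smul_of_mul_self_eq_one hG2, hz, Complex.cosh_mul_I,
    Complex.sinh_mul_I, ← Complex.ofReal_cos, ← Complex.ofReal_sin, cos_neg, sin_neg,
    Complex.ofReal_neg, ← Complex.coe_smul, ← Complex.coe_smul]
  module

theorem conjTranspose_gate (hG : G.IsHermitian) (θ : ℝ) : (gate n G θ)ᴴ = gate n G (-θ) := by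
  rw [gate, gate, ← Matrix.exp_conjTranspose, Matrix.conjTranspose_smul, hG.eq]
  congr 2
  simp [Complex.conj_ofReal]
  ring

theorem exists_gate_mul_mul_conjTranspose_eq_cos_sin (hG : G.IsHermitian) (hG2 : G * G = 1)
    (ρ : Matrix (Fin (2 ^ n)) (Fin (2 ^ n)) ℂ) :
    ∃ ρ₀ ρ₁ ρ₂ : Matrix (Fin (2 ^ n)) (Fin (2 ^ n)) ℂ,
      ∀ θ : ℝ, gate n G θ * ρ * (gate n G θ)ᴴ = ρ₀ + cos θ • ρ₁ + sin θ • ρ₂ := by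
  refine ⟨_, _, _, fun θ => Eq.trans ?_ (cos_sub_sin_mul_mul_cos_add_sin (Complex.I • G) ρ θ)⟩
  rw [conjTranspose_gate hG, gate_eq_cos_sub_sin hG2, gate_eq_cos_sub_sin hG2, neg_div, cos_neg,
    sin_neg, neg_smul, sub_neg_eq_add]

end Gate

theorem parameter_shift_rule_general (n : ℕ)
    (G : Matrix (Fin (2 ^ n)) (Fin (2 ^ n)) ℂ) (hG : G.IsHermitian) (hG2 : G * G = 1)
    (M ρ : Matrix (Fin (2 ^ n)) (Fin (2 ^ n)) ℂ) (θ : ℝ) :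
    HasDerivAt (expectation n G M ρ)
      ((expectation n G M ρ (θ + Real.pi / 2) - expectation n G M ρ (θ - Real.pi / 2)) / 2)
      θ := by
  obtain ⟨ρ₀, ρ₁, ρ₂, hstate⟩ := exists_gate_mul_mul_conjTranspose_eq_cos_sin hG hG2 ρ
  have hf (t : ℝ) : expectation n G M ρ t =
      (trace (M * ρ₀)).re + cos t * (trace (M * ρ₁)).re + sin t * (trace (M * ρ₂)).re := by
    rw [expectation, Matrix.mul_assoc (M * _), Matrix.mul_assoc M, ← Matrix.mul_assoc _ ρ, hstate]
    simp only [Matrix.mul_add, Matrix.mul_smul, trace_add, trace_smul, Complex.add_re,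
      Complex.smul_re, smul_eq_mul]
  simpa only [smul_eq_mul, div_eq_inv_mul] using hasDerivAt_shift_pi_div_two_of_eq_cos_sin hf θ

/-- The parameter-shift rule: `f` is differentiable in `θ` with derivative
`f′(θ) = (f(θ + π/2) − f(θ − π/2)) / 2`. -/
theorem parameter_shift_rule (n : ℕ) (hn : 1 ≤ n)
    (G : Matrix (Fin (2 ^ n)) (Fin (2 ^ n)) ℂ) (hG : G.IsHermitian) (hG2 : G * G = 1)
    (M ρ : Matrix (Fin (2 ^ n)) (Fin (2 ^ n)) ℂ) (θ : ℝ) :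
    HasDerivAt (expectation n G M ρ)
      ((expectation n G M ρ (θ + Real.pi / 2) - expectation n G M ρ (θ - Real.pi / 2)) / 2)
      θ :=
  parameter_shift_rule_general n G hG hG2 M ρ θ
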